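/- arXiv:2602.17852 — 7 statements merged into one kernel-verified Lean document; each statement's English description precedes it below -/
import Mathlib

section
/- Let n > 1 and let p be in the standard simplex of R^n. If p_i ≥ p_j for some indices i, j, then F(p)_i ≥ F(p)_j, where F(p)_k = p_k (n - p_k)/(n - L) and L = Σ_m p_m^2. Consequently the coordinate ordering is preserved under all iterates of F. -/
open Finset

/-- The attractive-interaction map on the standard simplex. -/
noncomputable def Fmap (n : ℕ) (p : Fin n → ℝ) : Fin n → ℝ :=
  fun k => p k * ((n : ℝ) - p k) / ((n : ℝ) - ∑ m, (p m) ^ 2)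

lemma Fmap_key (n : ℕ) (hn : 1 < n) (p : Fin n → ℝ)
    (hpos : ∀ i, 0 ≤ p i) (hsum : ∑ i, p i = 1) :
    (∀ i, 0 ≤ Fmap n p i) ∧ (∑ i, Fmap n p i = 1) ∧
      ∀ i j : Fin n, p j ≤ p i → Fmap n p j ≤ Fmap n p i := by
  have hn2 : (2 : ℝ) ≤ n := by exact_mod_cast hn
  have hle1 : ∀ k, p k ≤ 1 := by
    intro k
    calc p k ≤ ∑ i, p i := Finset.single_le_sum (fun i _ => hpos i) (mem_univ k)
    _ = 1 := hsum
  have hL : ∑ m, (p m) ^ 2 ≤ 1 := by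
    calc ∑ m, (p m) ^ 2 ≤ ∑ m, p m := by
          apply Finset.sum_le_sum
          intro m _
          nlinarith [hpos m, hle1 m]
    _ = 1 := hsum
  have hden : 0 < (n : ℝ) - ∑ m, (p m) ^ 2 := by linarith
  refine ⟨?_, ?_, ?_⟩
  · intro k
    apply div_nonneg _ hden.le
    have := hle1 k
    nlinarith [hpos k]
  · simp only [Fmap]
    rw [← Finset.sum_div]
    rw [div_eq_one_iff_eq hden.ne']
    have : ∀ k : Fin n, p k * ((n : ℝ) - p k) = p k * n - (p k) ^ 2 := by
      intro k; ring
    simp only [this, Finset.sum_sub_distrib, ← Finset.sum_mul, hsum, one_mul]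
  · intro a b hab
    unfold Fmap
    apply (div_le_div_iff_of_pos_right hden).mpr
    nlinarith [hpos a, hpos b, hle1 a, hle1 b]

theorem stmt1 (n : ℕ) (hn : 1 < n) (p : Fin n → ℝ)
    (hpos : ∀ i, 0 ≤ p i) (hsum : ∑ i, p i = 1)
    (i j : Fin n) (hij : p j ≤ p i) :
    Fmap n p j ≤ Fmap n p i ∧ ∀ t : ℕ, (Fmap n)^[t] p j ≤ (Fmap n)^[t] p i := by
  constructor
  · exact (Fmap_key n hn p hpos hsum).2.2 i j hij
  · have main : ∀ t : ℕ, (∀ k, 0 ≤ (Fmap n)^[t] p k) ∧ (∑ k, (Fmap n)^[t] p k = 1) ∧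
        (Fmap n)^[t] p j ≤ (Fmap n)^[t] p i := by
      intro t
      induction t with
      | zero => exact ⟨hpos, hsum, hij⟩
      | succ t ih =>
        obtain ⟨h1, h2, h3⟩ := ih
        obtain ⟨g1, g2, g3⟩ := Fmap_key n hn ((Fmap n)^[t] p) h1 h2
        simp only [Function.iterate_succ_apply']
        exact ⟨g1, g2, g3 i j h3⟩
    exact fun t => (main t).2.2
end

section
/- Let n > 1 and let p be in the standard simplex of R^n. Then L(F(p)) ≤ L(p), where F(p)_k = p_k (n - p_k)/(n - L(p)) and L(q) = Σ_m q_m^2; i.e., the sequence L^t = L(F^t(p)) is nonincreasing in t. -/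
open Finset

theorem stmt4 (n : ℕ) (hn : 1 < n) (p : Fin n → ℝ)
    (hpos : ∀ i, 0 ≤ p i) (hsum : ∑ i, p i = 1) :
    ∑ m, (Fmap n p m) ^ 2 ≤ ∑ m, (p m) ^ 2 := by
  set L : ℝ := ∑ m, (p m) ^ 2 with hLdef
  have hn2 : (2 : ℝ) ≤ (n : ℝ) := by exact_mod_cast hn
  have hp1 : ∀ i, p i ≤ 1 := by
    intro i
    calc p i ≤ ∑ j, p j := Finset.single_le_sum (fun j _ => hpos j) (mem_univ i)
    _ = 1 := hsum
  have hL0 : 0 ≤ L := Finset.sum_nonneg fun i _ => sq_nonneg _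
  have hL1 : L ≤ 1 := by
    rw [← hsum]
    apply Finset.sum_le_sum
    intro i _
    nlinarith [hpos i, hp1 i]
  have hD : (0 : ℝ) < (n : ℝ) - L := by linarith
  -- key identity and nonnegativity
  have key : ∑ i, p i ^ 2 * (((n : ℝ) - L) ^ 2 - ((n : ℝ) - p i) ^ 2)
      = ∑ i, p i * (p i - L) ^ 2 * (2 * (n : ℝ) - 2 * L - p i) := by
    have step : ∑ i, p i ^ 2 * (((n : ℝ) - L) ^ 2 - ((n : ℝ) - p i) ^ 2)
        = ∑ i, (p i * (p i - L) ^ 2 * (2 * (n : ℝ) - 2 * L - p i)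
            + 2 * L * ((n : ℝ) - L) * (p i ^ 2 - L * p i)) :=
      Finset.sum_congr rfl fun i _ => by ring
    rw [step, Finset.sum_add_distrib]
    have hz : ∑ i, 2 * L * ((n : ℝ) - L) * (p i ^ 2 - L * p i) = 0 := by
      rw [← Finset.mul_sum, Finset.sum_sub_distrib, ← Finset.mul_sum, hsum]
      simp [← hLdef]
    rw [hz, add_zero]
  have hnonneg : 0 ≤ ∑ i, p i ^ 2 * (((n : ℝ) - L) ^ 2 - ((n : ℝ) - p i) ^ 2) := by
    rw [key]
    apply Finset.sum_nonneg
    intro i _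
    have h1 : 0 ≤ 2 * (n : ℝ) - 2 * L - p i := by linarith [hp1 i]
    have := hpos i
    positivity
  have hmain : ∑ i, (p i * ((n : ℝ) - p i)) ^ 2 ≤ L * ((n : ℝ) - L) ^ 2 := by
    have expand : ∑ i, p i ^ 2 * (((n : ℝ) - L) ^ 2 - ((n : ℝ) - p i) ^ 2)
        = (∑ i, p i ^ 2) * ((n : ℝ) - L) ^ 2 - ∑ i, (p i * ((n : ℝ) - p i)) ^ 2 := by
      rw [Finset.sum_mul, ← Finset.sum_sub_distrib]
      exact Finset.sum_congr rfl fun i _ => by ring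
    rw [expand, ← hLdef] at hnonneg
    linarith
  have hF : ∑ m, (Fmap n p m) ^ 2
      = (∑ i, (p i * ((n : ℝ) - p i)) ^ 2) / ((n : ℝ) - L) ^ 2 := by
    rw [Finset.sum_div]
    apply Finset.sum_congr rfl
    intro i _
    rw [Fmap, div_pow, ← hLdef]
  rw [hF, div_le_iff₀ (by positivity)]
  calc ∑ i, (p i * ((n : ℝ) - p i)) ^ 2 ≤ L * ((n : ℝ) - L) ^ 2 := hmain
  _ = (∑ m, p m ^ 2) * ((n : ℝ) - L) ^ 2 := by rw [← hLdef]
end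

section
/- Let n > 1 and let p be in the standard simplex of R^n with L = Σ_i p_i^2. If p_i > L, then F(p)_i < p_i and moreover F(p)_i > L(F(p)), so the sequence of i-th coordinates of iterates of F is strictly decreasing while it stays above the current value of L. -/
open Finset

theorem stmt5 (n : ℕ) (hn : 1 < n) (p : Fin n → ℝ)
    (hpos : ∀ i, 0 ≤ p i) (hsum : ∑ i, p i = 1)
    (i : Fin n) (hi : (∑ m, (p m) ^ 2) < p i) :
    Fmap n p i < p i ∧ (∑ m, (Fmap n p m) ^ 2) < Fmap n p i := by
  set L : ℝ := ∑ m, (p m) ^ 2 with hL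
  have h2n : (2:ℝ) ≤ n := by exact_mod_cast hn
  have hL0 : 0 ≤ L := Finset.sum_nonneg fun k _ => sq_nonneg _
  have hple : ∀ k, p k ≤ 1 := by
    intro k
    rw [← hsum]
    exact Finset.single_le_sum (fun j _ => hpos j) (Finset.mem_univ k)
  have hpi1 : p i ≤ 1 := hple i
  have hL1 : L < 1 := lt_of_lt_of_le hi hpi1
  have hpi0 : 0 < p i := lt_of_le_of_lt hL0 hi
  have hden : 0 < (n:ℝ) - L := by linarith
  have hFi : Fmap n p i = p i * ((n:ℝ) - p i) / ((n:ℝ) - L) := rfl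
  constructor
  · rw [hFi, div_lt_iff₀ hden]
    nlinarith
  · have hLFi : L < Fmap n p i := by
      rw [hFi, lt_div_iff₀ hden]
      nlinarith
    -- the key inequality:  L(F(p)) ≤ L(p)
    have hVar : ∑ k, p k * (p k - L)^2 = (∑ k, (p k)^3) - L^2 := by
      have h : ∀ k ∈ Finset.univ, p k * (p k - L)^2
          = (p k)^3 - 2*L*(p k)^2 + L^2 * p k := fun k _ => by ring
      rw [Finset.sum_congr rfl h, Finset.sum_add_distrib, Finset.sum_sub_distrib,
        ← Finset.mul_sum, ← Finset.mul_sum, hsum, ← hL]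
      ring
    have hCub : ∑ k, p k * (p k - L)^3
        = (∑ k, (p k)^4) - 3*L*(∑ k, (p k)^3) + 2*L^3 := by
      have h : ∀ k ∈ Finset.univ, p k * (p k - L)^3
          = (p k)^4 - 3*L*(p k)^3 + 3*L^2*(p k)^2 - L^3 * p k := fun k _ => by ring
      rw [Finset.sum_congr rfl h, Finset.sum_sub_distrib, Finset.sum_add_distrib,
        Finset.sum_sub_distrib, ← Finset.mul_sum, ← Finset.mul_sum, ← Finset.mul_sum,
        hsum, ← hL]
      ring
    have hVar0 : 0 ≤ ∑ k, p k * (p k - L)^2 :=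
      Finset.sum_nonneg fun k _ => mul_nonneg (hpos k) (sq_nonneg _)
    have hCubLe : ∑ k, p k * (p k - L)^3 ≤ ∑ k, p k * (p k - L)^2 := by
      apply Finset.sum_le_sum
      intro k _
      have h1 : p k - L ≤ 1 := by have := hple k; linarith
      nlinarith [mul_nonneg (mul_nonneg (hpos k) (sq_nonneg (p k - L)))
        (show (0:ℝ) ≤ 1 - (p k - L) by linarith)]
    have hExp : ∑ k, (p k * ((n:ℝ) - p k))^2
        = (n:ℝ)^2 * L - 2*(n:ℝ)*(∑ k, (p k)^3) + ∑ k, (p k)^4 := by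
      have h : ∀ k ∈ Finset.univ, (p k * ((n:ℝ) - p k))^2
          = (n:ℝ)^2 * (p k)^2 - 2*(n:ℝ)*(p k)^3 + (p k)^4 := fun k _ => by ring
      rw [Finset.sum_congr rfl h, Finset.sum_add_distrib, Finset.sum_sub_distrib,
        ← Finset.mul_sum, ← Finset.mul_sum, ← hL]
    have key : ∑ k, (p k * ((n:ℝ) - p k))^2 ≤ L * ((n:ℝ) - L)^2 := by
      rw [hExp]
      set S3 : ℝ := ∑ k, (p k)^3
      set S4 : ℝ := ∑ k, (p k)^4
      rw [hVar] at hVar0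
      rw [hVar, hCub] at hCubLe
      have hfac : (0:ℝ) ≤ 2*(n:ℝ) - 1 - 3*L := by linarith
      nlinarith [mul_nonneg hfac hVar0]
    have hsq : ∑ m, (Fmap n p m)^2 = (∑ k, (p k * ((n:ℝ) - p k))^2) / ((n:ℝ) - L)^2 := by
      rw [Finset.sum_div]
      apply Finset.sum_congr rfl
      intro k _
      rw [show Fmap n p k = p k * ((n:ℝ) - p k) / ((n:ℝ) - L) from rfl, div_pow]
    have : ∑ m, (Fmap n p m)^2 ≤ L := by
      rw [hsq, div_le_iff₀ (by positivity)]
      nlinarith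
    linarith
end

section
/- Let n > 1 and let p be in the standard simplex of R^n with all coordinates strictly positive. Then the iterates F^t(p) converge as t → ∞ to the uniform vector (1/n, ..., 1/n), where F(p)_k = p_k (n - p_k)/(n - L(p)), L(p) = Σ_m p_m^2. -/
open Finset Filter

lemma key_step (n : ℕ) (hn : 1 < n) (hne : (univ : Finset (Fin n)).Nonempty)
    (p : Fin n → ℝ) (hpos : ∀ i, 0 < p i) (hsum : ∑ i, p i = 1) :
    (∀ i, 0 < Fmap n p i) ∧ (∑ i, Fmap n p i = 1) ∧
    (univ.inf' hne p ≤ univ.inf' hne (Fmap n p)) ∧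
    (univ.sup' hne (Fmap n p) - univ.inf' hne (Fmap n p) ≤
      (1 - univ.inf' hne p / n) * (univ.sup' hne p - univ.inf' hne p)) := by
  have hN : (2:ℝ) ≤ n := by exact_mod_cast hn
  have hle1 : ∀ i, p i ≤ 1 := by
    intro i
    calc p i ≤ ∑ j, p j := Finset.single_le_sum (fun j _ => (hpos j).le) (mem_univ i)
    _ = 1 := hsum
  set m := univ.inf' hne p with hm
  set M := univ.sup' hne p with hM
  set L := ∑ k, (p k)^2 with hLdef
  have hmpos : 0 < m := (Finset.lt_inf'_iff hne).mpr (fun i _ => hpos i)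
  have hmM : m ≤ M := le_trans (inf'_le p (mem_univ hne.choose)) (le_sup' p (mem_univ hne.choose))
  have hM1 : M ≤ 1 := sup'_le hne p (fun i _ => hle1 i)
  have hmle : ∀ i, m ≤ p i := fun i => inf'_le p (mem_univ i)
  have hMge : ∀ i, p i ≤ M := fun i => le_sup' p (mem_univ i)
  have hcard : (univ : Finset (Fin n)).card = n := by simp
  have hnm : (n:ℝ) * m ≤ 1 := by
    have : ∑ _k : Fin n, m ≤ ∑ k, p k := Finset.sum_le_sum (fun i _ => hmle i)
    simpa [hsum, hcard, mul_comm] using this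
  have hnM : 1 ≤ (n:ℝ) * M := by
    have : ∑ k, p k ≤ ∑ _k : Fin n, M := Finset.sum_le_sum (fun i _ => hMge i)
    simpa [hsum, hcard, mul_comm] using this
  have hnpos : (0:ℝ) < n := by linarith
  have hm1n : m ≤ 1 / n := by rw [le_div_iff₀ hnpos]; linarith [hnm]
  have hLn : 1 / (n:ℝ) ≤ L := by
    have h0 : (0:ℝ) ≤ ∑ k, (p k - 1/n)^2 := Finset.sum_nonneg (fun i _ => sq_nonneg _)
    have hexp : ∑ k, (p k - 1/n)^2 = L - 2/n * (∑ k, p k) + n * (1/n)^2 := by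
      have h1 : ∀ k : Fin n, (p k - 1/(n:ℝ))^2 = (p k^2 - (2/n) * p k) + (1/n)^2 :=
        fun k => by ring
      rw [Finset.sum_congr rfl fun k _ => h1 k, Finset.sum_add_distrib,
        Finset.sum_sub_distrib, ← Finset.mul_sum, Finset.sum_const, hcard,
        nsmul_eq_mul, ← hLdef]
    have h2 : (n:ℝ) * (1/n)^2 = 1/n := by field_simp
    rw [hexp, hsum, h2] at h0
    have h3 : 2/(n:ℝ) = 2*(1/n) := by ring
    rw [h3] at h0
    linarith
  have hLM : L ≤ M := by
    calc L = ∑ k, p k * p k := by simp [hLdef, sq]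
    _ ≤ ∑ k, p k * M := Finset.sum_le_sum (fun i _ => by nlinarith [hpos i, hMge i])
    _ = M := by rw [← Finset.sum_mul, hsum, one_mul]
  have hden : (0:ℝ) < n - L := by linarith
  have hFpos : ∀ i, 0 < Fmap n p i := by
    intro i
    have : 0 < p i * (n - p i) := by nlinarith [hpos i, hle1 i]
    exact div_pos this hden
  have hFsum : ∑ i, Fmap n p i = 1 := by
    unfold Fmap
    rw [← Finset.sum_div]
    rw [div_eq_one_iff_eq (ne_of_gt hden)]
    have : ∀ k : Fin n, p k * ((n:ℝ) - p k) = n * p k - (p k)^2 := fun k => by ring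
    rw [Finset.sum_congr rfl (fun k _ => this k), Finset.sum_sub_distrib, ← Finset.mul_sum, hsum]
    ring
  refine ⟨hFpos, hFsum, ?_, ?_⟩
  · -- min nondecreasing
    apply le_inf' hne
    intro i _
    have h1 : m * ((n:ℝ) - m) ≤ p i * (n - p i) := by nlinarith [hmle i, hle1 i, hpos i]
    have h2 : m * ((n:ℝ) - L) ≤ m * (n - m) := by nlinarith [hm1n, hLn]
    calc m = m * (n - L) / (n - L) := by field_simp
    _ ≤ p i * (n - p i) / (n - L) := (div_le_div_iff_of_pos_right hden).mpr (h2.trans h1)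
    _ = Fmap n p i := rfl
  · -- oscillation contraction
    have hsupF : univ.sup' hne (Fmap n p) ≤ M * (n - M) / (n - L) := by
      apply sup'_le hne
      intro i _
      have h1 : p i * ((n:ℝ) - p i) ≤ M * (n - M) := by nlinarith [hMge i, hle1 i, hpos i]
      exact (div_le_div_iff_of_pos_right hden).mpr h1
    have hinfF : m * ((n:ℝ) - m) / (n - L) ≤ univ.inf' hne (Fmap n p) := by
      apply le_inf' hne
      intro i _
      have h1 : m * ((n:ℝ) - m) ≤ p i * (n - p i) := by nlinarith [hmle i, hle1 i, hpos i]
      exact (div_le_div_iff_of_pos_right hden).mpr h1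
    have hkey : (M * (n - M) - m * ((n:ℝ) - m)) / (n - L) ≤ (1 - m / n) * (M - m) := by
      rw [div_le_iff₀ hden]
      have hML : (n:ℝ) - L ≥ n - M := by linarith
      have e1 : ((n:ℝ) - M - m) ≤ (1 - m/n) * (n - M) := by
        rw [sub_mul, one_mul]
        have : m / n * ((n:ℝ) - M) ≤ m := by
          rw [div_mul_eq_mul_div, div_le_iff₀ hnpos]
          nlinarith
        linarith
      have e2 : (1 - m/(n:ℝ)) * (n - M) ≤ (1 - m/n) * (n - L) := by
        have hc : 0 ≤ 1 - m/(n:ℝ) := by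
          have : m / (n:ℝ) ≤ 1 := by rw [div_le_one hnpos]; linarith
          linarith
        exact mul_le_mul_of_nonneg_left (by linarith) hc
      have e3 : M * ((n:ℝ) - M) - m * (n - m) = (M - m) * (n - M - m) := by ring
      rw [e3]
      calc (M - m) * ((n:ℝ) - M - m) ≤ (M - m) * ((1 - m/n) * (n - L)) :=
            mul_le_mul_of_nonneg_left (e1.trans e2) (by linarith)
      _ = (1 - m/n) * (M - m) * (n - L) := by ring
    have : univ.sup' hne (Fmap n p) - univ.inf' hne (Fmap n p)
        ≤ (M * (n - M) - m * ((n:ℝ) - m)) / (n - L) := by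
      rw [sub_div]
      linarith
    exact this.trans hkey

theorem stmt8 (n : ℕ) (hn : 1 < n) (p : Fin n → ℝ)
    (hpos : ∀ i, 0 < p i) (hsum : ∑ i, p i = 1) :
    Tendsto (fun t : ℕ => (Fmap n)^[t] p) atTop (nhds (fun _ => 1 / (n : ℝ))) := by
  have hne : (univ : Finset (Fin n)).Nonempty := ⟨⟨0, by omega⟩, mem_univ _⟩
  have hnpos : (0:ℝ) < n := by positivity
  have hcard : (univ : Finset (Fin n)).card = n := by simp
  set q : ℕ → Fin n → ℝ := fun t => (Fmap n)^[t] p with hq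
  set m0 := univ.inf' hne p with hm0
  set c : ℝ := 1 - m0 / n with hcdef
  set C := univ.sup' hne p - m0 with hC
  clear_value q m0 c C
  have hN : (2:ℝ) ≤ n := by exact_mod_cast hn
  have hm0pos : 0 < m0 := hm0 ▸ (Finset.lt_inf'_iff hne).mpr fun i _ => hpos i
  have hm01n : m0 ≤ 1 / n := by
    have h1 : (n:ℝ) * m0 ≤ 1 := by
      have h2 : ∑ _i : Fin n, m0 ≤ ∑ i, p i := by
        rw [hm0]
        exact Finset.sum_le_sum (fun i (_ : i ∈ univ) => inf'_le p (mem_univ i))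
      rw [Finset.sum_const, hcard, nsmul_eq_mul, hsum] at h2
      exact h2
    rw [le_div_iff₀ hnpos]; linarith
  have hc0 : 0 ≤ c := by
    have : m0 / n ≤ 1 := by
      rw [div_le_one hnpos]
      calc m0 ≤ 1/n := hm01n
      _ ≤ n := by rw [div_le_iff₀ hnpos]; nlinarith
    simp [hcdef]; linarith
  have hc1 : c < 1 := by
    have : 0 < m0 / n := div_pos hm0pos hnpos
    simp [hcdef]; linarith
  have hinv : ∀ t, (∀ i, 0 < q t i) ∧ (∑ i, q t i = 1) ∧ m0 ≤ univ.inf' hne (q t) ∧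
      univ.sup' hne (q t) - univ.inf' hne (q t) ≤ C * c ^ t := by
    intro t
    induction t with
    | zero =>
      have hq0 : q 0 = p := by rw [hq]; simp
      rw [hq0]
      exact ⟨hpos, hsum, le_of_eq hm0, by simp [hC, hm0]⟩
    | succ t ih =>
      obtain ⟨h1, h2, h3, h4⟩ := ih
      obtain ⟨g1, g2, g3, g4⟩ := key_step n hn hne (q t) h1 h2
      have hiter : q (t+1) = Fmap n (q t) := by
        rw [hq]; simp [Function.iterate_succ_apply']
      rw [hiter]
      refine ⟨g1, g2, h3.trans g3, ?_⟩
      have hfac : 1 - univ.inf' hne (q t) / n ≤ c := by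
        rw [hcdef]
        have : m0 / (n:ℝ) ≤ univ.inf' hne (q t) / n := by gcongr
        linarith
      have hosc0 : 0 ≤ univ.sup' hne (q t) - univ.inf' hne (q t) := by
        have := le_trans (inf'_le (q t) (mem_univ hne.choose)) (le_sup' (q t) (mem_univ hne.choose))
        linarith
      calc univ.sup' hne (Fmap n (q t)) - univ.inf' hne (Fmap n (q t))
          ≤ (1 - univ.inf' hne (q t) / n) * (univ.sup' hne (q t) - univ.inf' hne (q t)) := g4
      _ ≤ c * (C * c ^ t) := by
          apply mul_le_mul hfac h4 hosc0 hc0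
      _ = C * c ^ (t+1) := by ring
  rw [tendsto_pi_nhds]
  intro k
  have hb : ∀ t, ‖q t k - 1/(n:ℝ)‖ ≤ C * c ^ t := by
    intro t
    obtain ⟨h1, h2, h3, h4⟩ := hinv t
    have hki : univ.inf' hne (q t) ≤ q t k := inf'_le _ (mem_univ k)
    have hks : q t k ≤ univ.sup' hne (q t) := le_sup' _ (mem_univ k)
    have hlow : univ.inf' hne (q t) ≤ 1/n := by
      have hs : (n:ℝ) * univ.inf' hne (q t) ≤ 1 := by
        have h5 : ∑ _i : Fin n, univ.inf' hne (q t) ≤ ∑ i, q t i :=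
          Finset.sum_le_sum (fun i (_ : i ∈ univ) => inf'_le (q t) (mem_univ i))
        rw [Finset.sum_const, hcard, nsmul_eq_mul, h2] at h5
        exact h5
      rw [le_div_iff₀ hnpos]; linarith
    have hhigh : 1/(n:ℝ) ≤ univ.sup' hne (q t) := by
      have hs : 1 ≤ (n:ℝ) * univ.sup' hne (q t) := by
        have h5 : ∑ i, q t i ≤ ∑ _i : Fin n, univ.sup' hne (q t) :=
          Finset.sum_le_sum (fun i (_ : i ∈ univ) => le_sup' (q t) (mem_univ i))
        rw [Finset.sum_const, hcard, nsmul_eq_mul, h2] at h5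
        exact h5
      rw [div_le_iff₀ hnpos]; linarith
    rw [Real.norm_eq_abs, abs_le]
    constructor <;> linarith [h4, hki, hks, hlow, hhigh]
  have hg : Tendsto (fun t : ℕ => C * c ^ t) atTop (nhds 0) := by
    simpa using (tendsto_pow_atTop_nhds_zero_of_lt_one hc0 hc1).const_mul C
  have h0 := squeeze_zero_norm hb hg
  have := tendsto_sub_nhds_zero_iff.mp h0
  simpa using this
end

section
/- Let n > 1 and c_i > 0. If c_i = c_j = c for two indices i ≠ j and p is in the standard simplex with p_i < p_j, then G(p)_i < G(p)_j, where G(p)_k = p_k (n - 1 + c_k(1 - p_k)) / (n - 1 + L_c(p)), L_c(p) = Σ_m c_m p_m (1 - p_m). -/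
open Finset

/-- The heterogeneous attractive-interaction map. -/
noncomputable def Gmap (n : ℕ) (c : Fin n → ℝ) (p : Fin n → ℝ) : Fin n → ℝ :=
  fun i => p i * ((n : ℝ) - 1 + c i * (1 - p i)) /
    ((n : ℝ) - 1 + ∑ k, c k * p k * (1 - p k))

theorem stmt12 (n : ℕ) (hn : 1 < n) (c : Fin n → ℝ) (hc : ∀ i, 0 < c i)
    (i j : Fin n) (hij : i ≠ j) (hcij : c i = c j)
    (p : Fin n → ℝ) (hpos : ∀ k, 0 ≤ p k) (hsum : ∑ k, p k = 1)
    (hlt : p i < p j) :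
    Gmap n c p i < Gmap n c p j := by
  have hle1 : ∀ k, p k ≤ 1 := by
    intro k
    calc p k ≤ ∑ m, p m := Finset.single_le_sum (fun m _ => hpos m) (Finset.mem_univ k)
    _ = 1 := hsum
  have hij1 : p i + p j ≤ 1 := by
    have h : ∑ m ∈ ({i, j} : Finset (Fin n)), p m ≤ ∑ m, p m :=
      Finset.sum_le_sum_of_subset_of_nonneg (Finset.subset_univ _) (fun m _ _ => hpos m)
    rwa [Finset.sum_pair hij, hsum] at h
  have hn1 : (1 : ℝ) ≤ (n : ℝ) - 1 := by
    have : (2 : ℝ) ≤ (n : ℝ) := by exact_mod_cast hn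
    linarith
  have hD : 0 < (n : ℝ) - 1 + ∑ k, c k * p k * (1 - p k) := by
    have hL : 0 ≤ ∑ k, c k * p k * (1 - p k) :=
      Finset.sum_nonneg fun k _ => mul_nonneg (mul_nonneg (hc k).le (hpos k)) (by linarith [hle1 k])
    linarith
  unfold Gmap
  apply div_lt_div_of_pos_right _ hD
  rw [hcij]
  nlinarith [mul_nonneg (mul_nonneg (hc j).le (sub_pos.mpr hlt).le)
      (by linarith : (0:ℝ) ≤ 1 - p i - p j),
    mul_pos (sub_pos.mpr hlt) (by linarith : (0:ℝ) < (n:ℝ) - 1)]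
end

section
/- For n = 2 and c_1, c_2 > 0, let f(x) = (x + c_1 x - c_1 x^2)/(1 + (c_1+c_2)x - (c_1+c_2)x^2) be the one-dimensional reduction of the dynamics, and let x* = c_1/(c_1+c_2). Then f(x*) = x* and f'(x*) = (c_1 + c_2)/(c_1 + c_2 + c_1 c_2), which lies strictly between 0 and 1; hence x* is a locally asymptotically stable fixed point. -/
/-!
Write `f = N / D` and `s = c₁ + c₂`. Then `N x - x * D x = x (1 - x) (c₁ - s x)`, so every `x` with
`s x = c₁` is a fixed point. At a fixed point of a quotient, `f' = (N' - x D') / D`, and at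
`x₀ = c₁ / s` the numerator `N' - x₀ D' = 1 + (1 - 2 x₀) (c₁ - s x₀)` equals `1`. Hence
`f'(x₀) = 1 / D(x₀) = s / (s + c₁ c₂)`, which lies in `(0, 1)` because `c₁ c₂ > 0`.
-/

theorem HasDerivAt.div_of_fixedPoint {𝕜 : Type*} [NontriviallyNormedField 𝕜] {N D : 𝕜 → 𝕜}
    {N' D' x : 𝕜} (hN : HasDerivAt N N' x) (hD : HasDerivAt D D' x) (hDx : D x ≠ 0)
    (hfix : N x = x * D x) :
    HasDerivAt (fun y => N y / D y) ((N' - x * D') / D x) x := by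
  refine (hN.div hD hDx).congr_deriv ?_
  rw [hfix]
  field_simp

section AttractiveMap

variable (c₁ c₂ : ℝ)

theorem hasDerivAt_attractiveNumer (x : ℝ) :
    HasDerivAt (fun y => y + c₁ * y - c₁ * y ^ 2) (1 + c₁ - 2 * c₁ * x) x := by
  refine (((hasDerivAt_id x).add ((hasDerivAt_id x).const_mul c₁)).sub
    ((hasDerivAt_pow 2 x).const_mul c₁)).congr_deriv ?_
  simp only [Nat.cast_ofNat]
  ring

theorem hasDerivAt_attractiveDenom (x : ℝ) :
    HasDerivAt (fun y => 1 + (c₁ + c₂) * y - (c₁ + c₂) * y ^ 2)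
      (c₁ + c₂ - 2 * (c₁ + c₂) * x) x := by
  refine (((hasDerivAt_id x).const_mul (c₁ + c₂)).const_add 1 |>.sub
    ((hasDerivAt_pow 2 x).const_mul (c₁ + c₂))).congr_deriv ?_
  simp only [Nat.cast_ofNat]
  ring

variable {c₁ c₂}

theorem attractiveNumer_eq_mul_denom {x : ℝ} (hx : (c₁ + c₂) * x = c₁) :
    x + c₁ * x - c₁ * x ^ 2 = x * (1 + (c₁ + c₂) * x - (c₁ + c₂) * x ^ 2) := by
  linear_combination (-x * (1 - x)) * hx

theorem attractiveDeriv_numer_eq_one {x : ℝ} (hx : (c₁ + c₂) * x = c₁) :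
    1 + c₁ - 2 * c₁ * x - x * (c₁ + c₂ - 2 * (c₁ + c₂) * x) = 1 := by
  linear_combination (2 * x - 1) * hx

theorem attractiveDenom_div (hs : c₁ + c₂ ≠ 0) :
    1 + (c₁ + c₂) * (c₁ / (c₁ + c₂)) - (c₁ + c₂) * (c₁ / (c₁ + c₂)) ^ 2
      = (c₁ + c₂ + c₁ * c₂) / (c₁ + c₂) := by
  field_simp
  ring

end AttractiveMap

theorem stmt15 (c₁ c₂ : ℝ) (hc₁ : 0 < c₁) (hc₂ : 0 < c₂) :
    let f : ℝ → ℝ := fun x =>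
      (x + c₁ * x - c₁ * x ^ 2) / (1 + (c₁ + c₂) * x - (c₁ + c₂) * x ^ 2)
    let x₀ := c₁ / (c₁ + c₂)
    f x₀ = x₀ ∧
      HasDerivAt f ((c₁ + c₂) / (c₁ + c₂ + c₁ * c₂)) x₀ ∧
      0 < (c₁ + c₂) / (c₁ + c₂ + c₁ * c₂) ∧
      (c₁ + c₂) / (c₁ + c₂ + c₁ * c₂) < 1 := by
  intro f x₀
  have hs : c₁ + c₂ ≠ 0 := by positivity
  have hx₀ : (c₁ + c₂) * x₀ = c₁ := mul_div_cancel₀ c₁ hs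
  have hD := attractiveDenom_div hs
  have hDne : 1 + (c₁ + c₂) * x₀ - (c₁ + c₂) * x₀ ^ 2 ≠ 0 := by
    rw [hD]
    positivity
  have hfix := attractiveNumer_eq_mul_denom hx₀
  refine ⟨(div_eq_iff hDne).2 hfix, ?_, by positivity, ?_⟩
  · refine ((hasDerivAt_attractiveNumer c₁ x₀).div_of_fixedPoint
      (hasDerivAt_attractiveDenom c₁ c₂ x₀) hDne hfix).congr_deriv ?_
    rw [attractiveDeriv_numer_eq_one hx₀, hD, one_div_div]
  · rw [div_lt_one (by positivity)]
    linarith [mul_pos hc₁ hc₂]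
end

section
/- Let c_1, c_2, c_3 > 0 satisfy c_i > c_j c_k/(c_j + c_k) for every permutation (i,j,k) of (1,2,3). Then the vector p* with coordinates p*_i = (c_i c_j + c_i c_k - c_j c_k)/(c_1 c_2 + c_1 c_3 + c_2 c_3) (for {i,j,k} = {1,2,3}) has strictly positive coordinates summing to 1, and satisfies c_i(1 - p*_i)^2 = Σ_{m ≠ i} c_m p*_m (1 - p*_m) for each i, i.e., it is the interior fixed point of the three-component attractive-interaction system. -/
/-!
Writing `D = c₁c₂ + c₁c₃ + c₂c₃`, one has `1 - p*ᵢ = 2 cⱼ cₖ / D`, so `cᵢ (1 - p*ᵢ) = 2 c₁c₂c₃ / D`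
does not depend on `i`. Once the common value `L` of `cᵢ (1 - pᵢ)` is known, the fixed-point equation
is just `L (1 - pᵢ) = L (pⱼ + pₖ)`. Positivity of the coordinates is the hypothesis
`cᵢ > cⱼ cₖ / (cⱼ + cₖ)` with the denominator cleared.
-/

theorem mul_one_sub_sq_eq_of_mul_one_sub_eq {R : Type*} [CommRing R] {c₁ c₂ c₃ p₁ p₂ p₃ L : R}
    (hsum : p₂ + p₃ = 1 - p₁) (h₁ : c₁ * (1 - p₁) = L) (h₂ : c₂ * (1 - p₂) = L)
    (h₃ : c₃ * (1 - p₃) = L) :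
    c₁ * (1 - p₁) ^ 2 = c₂ * p₂ * (1 - p₂) + c₃ * p₃ * (1 - p₃) :=
  calc c₁ * (1 - p₁) ^ 2 = L * (p₂ + p₃) := by rw [hsum, ← h₁]; ring
    _ = c₂ * p₂ * (1 - p₂) + c₃ * p₃ * (1 - p₃) := by linear_combination -p₂ * h₂ - p₃ * h₃

theorem mul_add_mul_sub_mul_pos_of_div_lt {a b c : ℝ} (hb : 0 < b) (hc : 0 < c)
    (h : b * c / (b + c) < a) : 0 < a * b + a * c - b * c := by
  rw [div_lt_iff₀ (add_pos hb hc)] at h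
  linarith

theorem stmt17 (c₁ c₂ c₃ : ℝ) (hc₁ : 0 < c₁) (hc₂ : 0 < c₂) (hc₃ : 0 < c₃)
    (h₁ : c₁ > c₂ * c₃ / (c₂ + c₃))
    (h₂ : c₂ > c₁ * c₃ / (c₁ + c₃))
    (h₃ : c₃ > c₁ * c₂ / (c₁ + c₂)) :
    let D := c₁ * c₂ + c₁ * c₃ + c₂ * c₃
    let p₁ := (c₁ * c₂ + c₁ * c₃ - c₂ * c₃) / D
    let p₂ := (c₁ * c₂ - c₁ * c₃ + c₂ * c₃) / D
    let p₃ := (c₁ * c₃ - c₁ * c₂ + c₂ * c₃) / D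
    0 < p₁ ∧ 0 < p₂ ∧ 0 < p₃ ∧ p₁ + p₂ + p₃ = 1 ∧
      c₁ * (1 - p₁) ^ 2 = c₂ * p₂ * (1 - p₂) + c₃ * p₃ * (1 - p₃) ∧
      c₂ * (1 - p₂) ^ 2 = c₁ * p₁ * (1 - p₁) + c₃ * p₃ * (1 - p₃) ∧
      c₃ * (1 - p₃) ^ 2 = c₁ * p₁ * (1 - p₁) + c₂ * p₂ * (1 - p₂) := by
  intro D p₁ p₂ p₃
  have hD : 0 < D := by positivity
  have hn₁ := mul_add_mul_sub_mul_pos_of_div_lt hc₂ hc₃ h₁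
  have hn₂ := mul_add_mul_sub_mul_pos_of_div_lt hc₁ hc₃ h₂
  have hn₃ := mul_add_mul_sub_mul_pos_of_div_lt hc₁ hc₂ h₃
  have hsum : p₁ + p₂ + p₃ = 1 := by
    simp only [p₁, p₂, p₃]
    field_simp
    ring
  have hL₁ : c₁ * (1 - p₁) = 2 * (c₁ * c₂ * c₃) / D := by simp only [p₁]; field_simp; ring
  have hL₂ : c₂ * (1 - p₂) = 2 * (c₁ * c₂ * c₃) / D := by simp only [p₂]; field_simp; ring
  have hL₃ : c₃ * (1 - p₃) = 2 * (c₁ * c₂ * c₃) / D := by simp only [p₃]; field_simp; ring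
  refine ⟨div_pos hn₁ hD, div_pos (by linarith) hD, div_pos (by linarith) hD, hsum,
    mul_one_sub_sq_eq_of_mul_one_sub_eq (by linear_combination hsum) hL₁ hL₂ hL₃,
    mul_one_sub_sq_eq_of_mul_one_sub_eq (by linear_combination hsum) hL₂ hL₁ hL₃,
    mul_one_sub_sq_eq_of_mul_one_sub_eq (by linear_combination hsum) hL₃ hL₁ hL₂⟩
end
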